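/- Let λ ∈ ℂ with Im λ ≥ 0, λ ≠ 0, and let K : {(x,t) : x ≤ t} → ℝ be continuous with |K(x,t)| ≤ σ((x+t)/2) for a decreasing integrable function σ on ℝ with ∫_x^∞ σ integrable. Define y(x) = e^{iλx} + ∫_x^∞ e^{iλt} K(x,t) dt. Then y(x) = e^{iλx}(1 + o(1)) as x → ∞. -/

import Mathlib

/-!
Dividing by `e^{ilx}`, the error `y x / e^{ilx} - 1` is `∫_{t > x} e^{il(t-x)} K(x,t) dt`. For
`Im l ≥ 0` and `t ≥ x` the exponential has modulus at most one, so the error is bounded by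
`∫_{t > x} σ((x+t)/2) dt = 2 ∫_{u > x} σ u`, the tail of an integrable function, which tends to `0`.
-/

open MeasureTheory Set Filter Topology

lemma image_midpoint_Ioi (x : ℝ) : (fun t => (x + t) / 2) '' Ioi x = Ioi x := by
  ext u
  constructor
  · rintro ⟨t, ht, rfl⟩
    exact show x < (x + t) / 2 by linarith [mem_Ioi.mp ht]
  · intro hu
    exact ⟨2 * u - x, show x < 2 * u - x by linarith [mem_Ioi.mp hu], by ring⟩

lemma hasDerivWithinAt_midpoint (x : ℝ) (s : Set ℝ) (t : ℝ) :
    HasDerivWithinAt (fun t => (x + t) / 2) (1 / 2) s t :=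
  (((hasDerivAt_id t).const_add x).div_const 2).hasDerivWithinAt

section Midpoint

variable {E : Type*} [NormedAddCommGroup E] [NormedSpace ℝ E]

lemma integrableOn_Ioi_comp_midpoint_iff {f : ℝ → E} {x : ℝ} :
    IntegrableOn (fun t => f ((x + t) / 2)) (Ioi x) ↔ IntegrableOn f (Ioi x) := by
  have h := integrableOn_image_iff_integrableOn_abs_deriv_smul measurableSet_Ioi
    (fun t _ => hasDerivWithinAt_midpoint x (Ioi x) t) (fun _ _ _ _ h => by simpa using h) f
  rw [image_midpoint_Ioi] at h
  rw [h]
  exact (integrable_smul_iff (by norm_num) _).symm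

lemma integral_Ioi_comp_midpoint (f : ℝ → E) (x : ℝ) :
    ∫ t in Ioi x, f ((x + t) / 2) = (2 : ℝ) • ∫ u in Ioi x, f u := by
  have h := integral_image_eq_integral_abs_deriv_smul measurableSet_Ioi
    (fun t _ => hasDerivWithinAt_midpoint x (Ioi x) t) (fun _ _ _ _ h => by simpa using h) f
  rw [image_midpoint_Ioi, integral_smul] at h
  rw [h, smul_smul]
  norm_num

end Midpoint

lemma norm_cexp_I_mul_le_one {l : ℂ} (hl : 0 ≤ l.im) {s : ℝ} (hs : 0 ≤ s) :
    ‖Complex.exp (Complex.I * l * s)‖ ≤ 1 := by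
  rw [Complex.norm_exp, Real.exp_le_one_iff]
  simpa [Complex.mul_re] using mul_nonneg hl hs

lemma cexp_I_mul_div_cexp_I_mul (l : ℂ) (t x : ℝ) :
    Complex.exp (Complex.I * l * t) / Complex.exp (Complex.I * l * x) =
      Complex.exp (Complex.I * l * ↑(t - x)) := by
  rw [← Complex.exp_sub]
  push_cast
  ring_nf

lemma norm_integral_cexp_I_mul_div_le {l : ℂ} (hl : 0 ≤ l.im) {k : ℝ → ℂ} {b : ℝ → ℝ} {x : ℝ}
    (hb : IntegrableOn b (Ioi x)) (hk : ∀ t, x < t → ‖k t‖ ≤ b t) :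
    ‖(∫ t in Ioi x, Complex.exp (Complex.I * l * t) * k t) / Complex.exp (Complex.I * l * x)‖ ≤
      ∫ t in Ioi x, b t := by
  rw [div_eq_mul_inv, ← integral_mul_const]
  refine norm_integral_le_of_norm_le hb ?_
  filter_upwards [ae_restrict_mem measurableSet_Ioi] with t ht
  calc ‖Complex.exp (Complex.I * l * t) * k t * (Complex.exp (Complex.I * l * x))⁻¹‖
      = ‖Complex.exp (Complex.I * l * ↑(t - x))‖ * ‖k t‖ := by
        rw [← cexp_I_mul_div_cexp_I_mul, div_eq_mul_inv, norm_mul, norm_mul, norm_mul]; ring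
    _ ≤ 1 * b t := by
        gcongr
        · exact norm_cexp_I_mul_le_one hl (sub_nonneg.mpr ht.le)
        · exact hk t ht
    _ = b t := one_mul _

theorem jost_asymptotics_from_kernel_general
    (l : ℂ) (hl_im : 0 ≤ l.im)
    (K : ℝ → ℝ → ℝ) (σ : ℝ → ℝ)
    (hσ_int : ∀ a : ℝ, IntegrableOn σ (Set.Ioi a))
    (hK_bound : ∀ x t, x ≤ t → |K x t| ≤ σ ((x + t) / 2))
    (y : ℝ → ℂ)
    (hy : ∀ x : ℝ, y x = Complex.exp (Complex.I * l * x) +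
      ∫ t in Set.Ioi x, Complex.exp (Complex.I * l * t) * (K x t : ℂ)) :
    Filter.Tendsto (fun x : ℝ => y x / Complex.exp (Complex.I * l * x))
      Filter.atTop (nhds 1) := by
  have hbound : ∀ x, ‖y x / Complex.exp (Complex.I * l * x) - 1‖ ≤ 2 * ∫ u in Ioi x, σ u := by
    intro x
    rw [hy, add_div, div_self (Complex.exp_ne_zero _), add_sub_cancel_left,
      ← smul_eq_mul (a := (2 : ℝ)), ← integral_Ioi_comp_midpoint]
    refine norm_integral_cexp_I_mul_div_le hl_im
      (integrableOn_Ioi_comp_midpoint_iff.mpr (hσ_int x)) fun t ht => ?_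
    simpa using hK_bound x t ht.le
  have htail : Tendsto (fun x => 2 * ∫ u in Ioi x, σ u) atTop (𝓝 0) := by
    simpa using (tendsto_integral_Ioi_zero (μ := volume) (f := σ) tendsto_id).const_mul 2
  simpa using (squeeze_zero_norm hbound htail).add_const 1

theorem jost_asymptotics_from_kernel
    (l : ℂ) (hl_im : 0 ≤ l.im) (hl : l ≠ 0)
    (K : ℝ → ℝ → ℝ) (σ : ℝ → ℝ)
    (hσ_anti : Antitone σ)
    (hσ_int : ∀ a : ℝ, IntegrableOn σ (Set.Ioi a))
    (hσ1_int : ∀ a : ℝ, IntegrableOn (fun x => ∫ u in Set.Ioi x, σ u) (Set.Ioi a))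
    (hK_cont : ContinuousOn (fun p : ℝ × ℝ => K p.1 p.2) {p : ℝ × ℝ | p.1 ≤ p.2})
    (hK_bound : ∀ x t, x ≤ t → |K x t| ≤ σ ((x + t) / 2))
    (y : ℝ → ℂ)
    (hy : ∀ x : ℝ, y x = Complex.exp (Complex.I * l * x) +
      ∫ t in Set.Ioi x, Complex.exp (Complex.I * l * t) * (K x t : ℂ)) :
    Filter.Tendsto (fun x : ℝ => y x / Complex.exp (Complex.I * l * x))
      Filter.atTop (nhds 1) :=
  jost_asymptotics_from_kernel_general l hl_im K σ hσ_int hK_bound y hy
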